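/- Assume conditions (P) and (S). Then the second component of n^Γ(θ̃^(1,r)) = Σθ̃^(1,r) + μ is strictly positive if and only if γ₂(θ^(1,max)) > 0 (equivalently, face F₂ is reflective if and only if the condition θ^(1,max) ∈ ∂Γ₁, i.e. γ₂(θ^(1,max)) ≤ 0, is not satisfied). -/

import Mathlib

/-! At the rightmost point `θ^(1,max)` the normal of `∂Γ` is horizontal, so by strict convexity
every other point of `∂Γ` lies strictly to its left. On the vertical chord through `θ^(1,r)`,
the second component of the normal at `θ̃^(1,r)` is positive exactly when `θ̃^(1,r)` lies above
`θ^(1,r)`, i.e. when `γ₂(θ̃^(1,r)) > 0`, because `γ₂(θ^(1,r)) = 0`. Finally the line `γ₂ = 0`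
meets the convex region `γ ≥ 0` only in the segment from `0` to `θ^(1,r)`, so the part of that
region to the right of the chord, which contains `θ̃^(1,r)` and `θ^(1,max)`, lies on one side
of the line. -/

open Matrix Set

noncomputable section

abbrev V : Type := Fin 2 → ℝ

def gam (S : Matrix (Fin 2) (Fin 2) ℝ) (μ : V) (θ : V) : ℝ :=
  -(1/2) * (θ ⬝ᵥ S.mulVec θ) - μ ⬝ᵥ θ

def gam1 (R : Matrix (Fin 2) (Fin 2) ℝ) (θ : V) : ℝ := R 0 0 * θ 0 + R 1 0 * θ 1
def gam2 (R : Matrix (Fin 2) (Fin 2) ℝ) (θ : V) : ℝ := R 0 1 * θ 0 + R 1 1 * θ 1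

def condP (R : Matrix (Fin 2) (Fin 2) ℝ) : Prop :=
  0 < R 0 0 ∧ 0 < R 1 1 ∧ 0 < R 0 0 * R 1 1 - R 0 1 * R 1 0

def condS (μ : V) (R : Matrix (Fin 2) (Fin 2) ℝ) : Prop :=
  R 1 1 * μ 0 - R 0 1 * μ 1 < 0 ∧ R 0 0 * μ 1 - R 1 0 * μ 0 < 0

def pvec1 (R : Matrix (Fin 2) (Fin 2) ℝ) : V := ![R 1 1, -(R 0 1)]
def pvec2 (R : Matrix (Fin 2) (Fin 2) ℝ) : V := ![-(R 1 0), R 0 0]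

def θray1 (S : Matrix (Fin 2) (Fin 2) ℝ) (μ : V) (R : Matrix (Fin 2) (Fin 2) ℝ) : V :=
  (-2 * (μ ⬝ᵥ pvec1 R) / (pvec1 R ⬝ᵥ S.mulVec (pvec1 R))) • pvec1 R

def θray2 (S : Matrix (Fin 2) (Fin 2) ℝ) (μ : V) (R : Matrix (Fin 2) (Fin 2) ℝ) : V :=
  (-2 * (μ ⬝ᵥ pvec2 R) / (pvec2 R ⬝ᵥ S.mulVec (pvec2 R))) • pvec2 R

def Gam (S : Matrix (Fin 2) (Fin 2) ℝ) (μ : V) : Set V := {θ | 0 < gam S μ θ}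

def ltc (θ θ' : V) : Prop := ∀ i, θ i < θ' i

def Gmax (S : Matrix (Fin 2) (Fin 2) ℝ) (μ : V) : Set V :=
  {θ | ∃ θ' ∈ Gam S μ, ltc θ θ'}

def Dset (S : Matrix (Fin 2) (Fin 2) ℝ) (μ : V) (i : Fin 2) (c : ℝ) : Set V :=
  {θ | ∃ θ' ∈ Gam S μ, ltc θ θ' ∧ θ' i < c}

section Ellipse

variable {S : Matrix (Fin 2) (Fin 2) ℝ} {μ : V}

lemma gam_add (hS : S.IsSymm) (a v : V) :
    gam S μ (a + v) = gam S μ a - (S *ᵥ a + μ) ⬝ᵥ v - 1 / 2 * (v ⬝ᵥ S *ᵥ v) := by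
  have hsymm : S 1 0 = S 0 1 := hS.apply 0 1
  simp only [gam, mulVec, dotProduct, Fin.sum_univ_two, Pi.add_apply, hsymm]
  ring

lemma gam_add_smul_sub (hS : S.IsSymm) (a b : V) (t : ℝ) :
    gam S μ (a + t • (b - a)) = (1 - t) * gam S μ a + t * gam S μ b
      + t * (1 - t) / 2 * ((b - a) ⬝ᵥ S *ᵥ (b - a)) := by
  have hb : gam S μ b = gam S μ (a + (b - a)) := by rw [add_sub_cancel]
  rw [hb, gam_add hS, gam_add hS, mulVec_smul, dotProduct_smul, smul_dotProduct,
    dotProduct_smul, smul_eq_mul, smul_eq_mul, smul_eq_mul]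
  ring

/-- The time is the second root of the quadratic `t ↦ γ(a + t • w)`, the first being `0`. -/
lemma gam_add_smul_eq_zero (hS : S.IsSymm) {a : V} (ha : gam S μ a = 0) (w : V) :
    gam S μ (a + (-2 * ((S *ᵥ a + μ) ⬝ᵥ w) / (w ⬝ᵥ S *ᵥ w)) • w) = 0 := by
  rw [gam_add hS, ha, mulVec_smul, dotProduct_smul, smul_dotProduct, dotProduct_smul,
    smul_eq_mul, smul_eq_mul, smul_eq_mul]
  generalize (S *ᵥ a + μ) ⬝ᵥ w = n
  generalize w ⬝ᵥ S *ᵥ w = Q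
  rcases eq_or_ne Q 0 with hQ | hQ
  · simp [hQ]
  · field_simp
    ring

lemma normal_dotProduct_sub_neg (hSpd : S.PosDef) (hS : S.IsSymm) {a b : V}
    (ha : gam S μ a = 0) (hb : gam S μ b = 0) (hab : a ≠ b) :
    (S *ᵥ a + μ) ⬝ᵥ (b - a) < 0 := by
  have hQ : 0 < (b - a) ⬝ᵥ S *ᵥ (b - a) := by
    simpa using hSpd.dotProduct_mulVec_pos (sub_ne_zero.mpr hab.symm)
  have h := gam_add hS (μ := μ) a (b - a)
  rw [add_sub_cancel, ha, hb] at h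
  linarith

lemma normal_apply_one_eq_zero_of_isMax (hSpd : S.PosDef) (hS : S.IsSymm) {m : V}
    (hm : gam S μ m = 0) (hmax : ∀ θ, gam S μ θ = 0 → θ 0 ≤ m 0) :
    (S *ᵥ m + μ) 1 = 0 := by
  set n := S *ᵥ m + μ
  by_contra hn
  -- `w` points to the right and, unless `n 1 = 0`, strictly into `Γ`
  set w : V := ![n 1 ^ 2, -(n 1 * (n 0 + 1))]
  have hnw : n ⬝ᵥ w = -(n 1 ^ 2) := by
    simp only [w, dotProduct, Fin.sum_univ_two, cons_val_zero, cons_val_one]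
    ring
  have hn2 : 0 < n 1 ^ 2 := by positivity
  have hw0 : 0 < w 0 := hn2
  have hQ : 0 < w ⬝ᵥ S *ᵥ w := by
    simpa using hSpd.dotProduct_mulVec_pos (x := w) fun h => hw0.ne' (by simp [h])
  have ht : 0 < -2 * (n ⬝ᵥ w) / (w ⬝ᵥ S *ᵥ w) := div_pos (by linarith) hQ
  have hle := hmax _ (gam_add_smul_eq_zero hS hm w)
  simp only [Pi.add_apply, Pi.smul_apply, smul_eq_mul] at hle
  nlinarith

lemma apply_zero_lt_of_isMax (hSpd : S.PosDef) (hS : S.IsSymm) {m θ : V}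
    (hm : gam S μ m = 0) (hmax : ∀ θ, gam S μ θ = 0 → θ 0 ≤ m 0)
    (hθ : gam S μ θ = 0) (hne : θ ≠ m) : θ 0 < m 0 := by
  have h := normal_dotProduct_sub_neg hSpd hS hm hθ hne.symm
  rw [dotProduct, Fin.sum_univ_two, normal_apply_one_eq_zero_of_isMax hSpd hS hm hmax] at h
  refine (hmax θ hθ).lt_of_ne fun h0 => ?_
  simp [h0] at h

end Ellipse

section Ray

variable {S R : Matrix (Fin 2) (Fin 2) ℝ} {μ : V}

lemma dotProduct_pvec1_neg (h : condS μ R) : μ ⬝ᵥ pvec1 R < 0 := by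
  simp only [pvec1, dotProduct, Fin.sum_univ_two, cons_val_zero, cons_val_one]
  linarith [h.1]

lemma gam2_θray1 : gam2 R (θray1 S μ R) = 0 := by
  simp only [gam2, θray1, pvec1, Pi.smul_apply, smul_eq_mul, cons_val_zero, cons_val_one]
  ring

lemma gam_θray1 (hS : S.IsSymm) : gam S μ (θray1 S μ R) = 0 := by
  have h0 : gam S μ 0 = 0 := by simp [gam]
  simpa [θray1] using gam_add_smul_eq_zero hS h0 (pvec1 R)

lemma apply_zero_le_θray1 (hSpd : S.PosDef) (hR : 0 < R 1 1) (hμR : μ ⬝ᵥ pvec1 R < 0)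
    {q : V} (hq : 0 ≤ gam S μ q) (hq2 : gam2 R q = 0) : q 0 ≤ θray1 S μ R 0 := by
  set p := pvec1 R
  set σ := q 0 / R 1 1
  have hqp : q = σ • p := by
    have : R 0 1 * q 0 + R 1 1 * q 1 = 0 := hq2
    ext i
    fin_cases i
    · simp [σ, p, pvec1, hR.ne']
    · simp [σ, p, pvec1]
      field_simp
      linarith
  have hp : p ≠ 0 := fun h => hR.ne' (by simpa [p, pvec1] using congrFun h 0)
  have hQ : 0 < p ⬝ᵥ S *ᵥ p := by simpa using hSpd.dotProduct_mulVec_pos hp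
  set s := -2 * (μ ⬝ᵥ p) / (p ⬝ᵥ S *ᵥ p)
  have hs : s * (p ⬝ᵥ S *ᵥ p) = -2 * (μ ⬝ᵥ p) := div_mul_cancel₀ _ hQ.ne'
  have hs0 : 0 < s := div_pos (by linarith) hQ
  have hgam : gam S μ q = σ * (-(μ ⬝ᵥ p) - σ / 2 * (p ⬝ᵥ S *ᵥ p)) := by
    simp only [hqp, gam, mulVec_smul, dotProduct_smul, smul_dotProduct, smul_eq_mul]
    ring
  have hσ : σ ≤ s := by
    by_contra! h
    have hσ0 : 0 < σ := hs0.trans h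
    nlinarith [mul_pos (mul_pos hσ0 hQ) (sub_pos.2 h)]
  have hθ : θray1 S μ R 0 = s * R 1 1 := by simp [θray1, s, p, pvec1]
  rw [hθ, show q 0 = σ * R 1 1 by simp [σ, hR.ne']]
  exact mul_le_mul_of_nonneg_right hσ hR.le

/-- A segment joining `m` to `b` across the line `γ₂ = 0` would meet that line to the right of
`θ^(1,r)` at a point where `γ ≥ 0` by concavity, contradicting `apply_zero_le_θray1`. -/
lemma pos_gam2_mul_gam2 (hSpd : S.PosDef) (hS : S.IsSymm) (hR : 0 < R 1 1)
    (hμR : μ ⬝ᵥ pvec1 R < 0) {m b : V} (hm : 0 ≤ gam S μ m) (hb : 0 ≤ gam S μ b)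
    (hm0 : θray1 S μ R 0 < m 0) (hb0 : θray1 S μ R 0 ≤ b 0) (hb2 : gam2 R b ≠ 0) :
    0 < gam2 R m * gam2 R b := by
  by_contra! h
  set x := gam2 R m
  set y := gam2 R b
  have hy2 : 0 < y ^ 2 := by positivity
  have hxy : x - y ≠ 0 := fun h' => by
    rw [sub_eq_zero.mp h'] at h
    nlinarith
  set t := x / (x - y)
  have hd : 0 < (x - y) ^ 2 := by positivity
  have htx : t * (x - y) = x := div_mul_cancel₀ _ hxy
  have ht : t * (x - y) ^ 2 = x ^ 2 - x * y := by linear_combination (x - y) * htx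
  have ht0 : 0 ≤ t := by nlinarith [sq_nonneg x]
  have ht1 : t < 1 := by nlinarith
  set q := m + t • (b - m)
  have hq2 : gam2 R q = 0 := by
    have : gam2 R q = x + t * (y - x) := by
      simp only [q, x, y, gam2, Pi.add_apply, Pi.smul_apply, Pi.sub_apply, smul_eq_mul]
      ring
    rw [this]
    linear_combination -htx
  have hq : 0 ≤ gam S μ q := by
    rw [gam_add_smul_sub hS]
    have hQ : 0 ≤ (b - m) ⬝ᵥ S *ᵥ (b - m) := by
      simpa using hSpd.posSemidef.dotProduct_mulVec_nonneg (b - m)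
    have h1t : 0 ≤ 1 - t := by linarith
    nlinarith [mul_nonneg h1t hm, mul_nonneg ht0 hb, mul_nonneg (mul_nonneg ht0 h1t) hQ]
  have hq0 : θray1 S μ R 0 < q 0 := by
    have : q 0 = (1 - t) * m 0 + t * b 0 := by
      simp only [q, Pi.add_apply, Pi.smul_apply, Pi.sub_apply, smul_eq_mul]
      ring
    rw [this]
    nlinarith
  exact (apply_zero_le_θray1 hSpd hR hμR hq hq2).not_gt hq0

lemma pos_normal_apply_one_mul_gam2 (hSpd : S.PosDef) (hS : S.IsSymm) (hR : 0 < R 1 1)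
    {b : V} (hb : gam S μ b = 0) (hb0 : b 0 = θray1 S μ R 0) (hb1 : b 1 ≠ θray1 S μ R 1) :
    0 < (S *ᵥ b + μ) 1 * gam2 R b := by
  set a := θray1 S μ R
  have h := normal_dotProduct_sub_neg hSpd hS hb (gam_θray1 hS) fun h => hb1 (by rw [h])
  rw [dotProduct, Fin.sum_univ_two, Pi.sub_apply, Pi.sub_apply, hb0, sub_self, mul_zero,
    zero_add] at h
  have hb2 : gam2 R b = R 1 1 * (b 1 - a 1) := by
    have : gam2 R a = 0 := gam2_θray1
    simp only [gam2] at this ⊢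
    rw [hb0]
    linarith
  rw [hb2]
  nlinarith

end Ray

theorem stmt_11_general
    (S R : Matrix (Fin 2) (Fin 2) ℝ) (μ : V)
    (hSpd : S.PosDef) (hSsym : S.IsSymm)
    (hP : condP R) (hS : condS μ R)
    (θmax1 tθ1r : V)
    (hmax1 : gam S μ θmax1 = 0 ∧ ∀ θ, gam S μ θ = 0 → θ 0 ≤ θmax1 0)
    (htθ1r : (θray1 S μ R = θmax1 ∧ tθ1r = θmax1) ∨
      (θray1 S μ R ≠ θmax1 ∧ gam S μ tθ1r = 0 ∧
        tθ1r 0 = θray1 S μ R 0 ∧ tθ1r 1 ≠ θray1 S μ R 1)) :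
    0 < (S.mulVec tθ1r + μ) 1 ↔ 0 < gam2 R θmax1 := by
  obtain ⟨hmax, hmaxv⟩ := hmax1
  have hR : 0 < R 1 1 := hP.2.1
  rcases htθ1r with ⟨hray, rfl⟩ | ⟨hray, htθ, ht0, ht1⟩
  · rw [normal_apply_one_eq_zero_of_isMax hSpd hSsym hmax hmaxv, ← hray, gam2_θray1]
  · have hpartner := pos_normal_apply_one_mul_gam2 hSpd hSsym hR htθ ht0 ht1
    have hside := pos_gam2_mul_gam2 hSpd hSsym hR (dotProduct_pvec1_neg hS) hmax.ge htθ.ge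
      (apply_zero_lt_of_isMax hSpd hSsym hmax hmaxv (gam_θray1 hSsym) hray) ht0.ge
      (right_ne_zero_of_mul hpartner.ne')
    rw [pos_iff_pos_of_mul_pos hpartner, pos_iff_pos_of_mul_pos hside]

/-- face `F₂` is reflective (i.e. the second component of
`n^Γ(θ̃^(1,r)) = Σθ̃^(1,r) + μ` is positive) iff `γ₂(θ^(1,max)) > 0`. -/
theorem stmt_11
    (S R : Matrix (Fin 2) (Fin 2) ℝ) (μ : V)
    (hSpd : S.PosDef) (hSsym : S.IsSymm) (hμ : μ ≠ 0)
    (hP : condP R) (hS : condS μ R)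
    (θmax1 tθ1r : V)
    (hmax1 : gam S μ θmax1 = 0 ∧ ∀ θ, gam S μ θ = 0 → θ 0 ≤ θmax1 0)
    (htθ1r : (θray1 S μ R = θmax1 ∧ tθ1r = θmax1) ∨
      (θray1 S μ R ≠ θmax1 ∧ gam S μ tθ1r = 0 ∧
        tθ1r 0 = θray1 S μ R 0 ∧ tθ1r 1 ≠ θray1 S μ R 1)) :
    0 < (S.mulVec tθ1r + μ) 1 ↔ 0 < gam2 R θmax1 :=
  stmt_11_general S R μ hSpd hSsym hP hS θmax1 tθ1r hmax1 htθ1r
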